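/- arXiv:2001.05180 — 5 statements merged into one kernel-verified Lean document; each statement's English description precedes it below -/
import Mathlib

section
/- Let A be an integer matrix with d rows such that the last nonzero entry of every column is positive. Then there exists a matrix U in GL(d,ℤ), obtained as a product of elementary row-addition matrices, such that U·A has all entries nonnegative. -/
open Matrix

lemma tv_mul_same {d m : ℕ} (i j : Fin d) (c : ℤ) (M : Matrix (Fin d) (Fin m) ℤ) (b : Fin m) :
    (transvection i j c * M) i b = M i b + c * M j b := by
  simp [transvection, Matrix.add_mul, Matrix.smul_mul, Matrix.mul_apply, Matrix.single,
    Matrix.one_apply, add_mul, ite_and, Finset.sum_add_distrib, Finset.sum_ite_eq,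
    Finset.sum_ite_eq']

lemma tv_mul_ne {d m : ℕ} (i j : Fin d) (a : Fin d) (ha : a ≠ i) (c : ℤ) (M : Matrix (Fin d) (Fin m) ℤ) (b : Fin m) :
    (transvection i j c * M) a b = M a b := by
  simp [transvection, Matrix.add_mul, Matrix.smul_mul, Matrix.mul_apply, Matrix.single,
    Matrix.one_apply, ha, Ne.symm ha, Finset.sum_ite_eq, Finset.sum_ite_eq']

lemma inner_step {d m : ℕ} (p : Fin m → Fin d) (i : Fin d) :
    ∀ t : ℕ, ∀ B : Matrix (Fin d) (Fin m) ℤ,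
    (∀ j, 0 < B (p j) j) → (∀ j r, p j < r → B r j = 0) →
    (∀ (r : Fin d) j, i < r → 0 ≤ B r j) →
    ∃ (L : List (Matrix.TransvectionStruct (Fin d) ℤ)) (C : Matrix (Fin d) (Fin m) ℤ),
      C = (L.map Matrix.TransvectionStruct.toMatrix).prod * B ∧
      (∀ j, 0 < C (p j) j) ∧
      (∀ j r, p j < r → C r j = 0) ∧
      (∀ (r : Fin d) j, r ≠ i → C r j = B r j) ∧
      (∀ j, B i j ≤ C i j) ∧
      (∀ j, i < p j → (p j : ℕ) ≤ (i : ℕ) + t → 0 ≤ C i j) := by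
  intro t
  induction t with
  | zero =>
    intro B h1 h2 _
    refine ⟨[], B, by simp, h1, h2, fun _ _ _ => rfl, fun _ => le_refl _, ?_⟩
    intro j hj1 hj2
    exact absurd hj2 (by omega)
  | succ t IH =>
    intro B h1 h2 hlow
    obtain ⟨L, C, hC, hc1, hc2, hc3, hc4, hc5⟩ := IH B h1 h2 hlow
    by_cases hk : (i : ℕ) + t + 1 < d
    · set k : Fin d := ⟨(i : ℕ) + t + 1, hk⟩ with hkdef
      have hik : i < k := by
        rw [Fin.lt_def]
        simp only [hkdef]
        omega
      set c : ℤ := ∑ j, |C i j| with hcdef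
      have hc0 : 0 ≤ c := Finset.sum_nonneg fun j _ => abs_nonneg _
      have hcge : ∀ j, |C i j| ≤ c := fun j =>
        Finset.single_le_sum (fun j _ => abs_nonneg (C i j)) (Finset.mem_univ j)
      set D : Matrix (Fin d) (Fin m) ℤ := transvection i k c * C with hD
      have hDi : ∀ b, D i b = C i b + c * C k b := fun b => tv_mul_same i k c C b
      have hDne : ∀ (a : Fin d) b, a ≠ i → D a b = C a b := fun a b ha => tv_mul_ne i k a ha c C b
      have hCk : ∀ b, 0 ≤ C k b := by
        intro b
        rw [hc3 k b (ne_of_gt hik)]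
        exact hlow k b hik
      have hmono : ∀ b, C i b ≤ D i b := by
        intro b
        rw [hDi]
        nlinarith [hCk b]
      refine ⟨⟨i, k, ne_of_lt hik, c⟩ :: L, D, ?_, ?_, ?_, ?_, ?_, ?_⟩
      · rw [hD, hC]
        simp [Matrix.mul_assoc]
      · intro j
        rcases eq_or_ne (p j) i with h | h
        · rw [h]; exact lt_of_lt_of_le (h ▸ hc1 j) (hmono j)
        · rw [hDne _ _ h]; exact hc1 j
      · intro j r hr
        rcases eq_or_ne r i with h | h
        · subst h
          rw [hDi, hc2 j r hr, hc2 j k (lt_trans hr hik), mul_zero, add_zero]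
        · rw [hDne _ _ h]; exact hc2 j r hr
      · intro r j hr
        rw [hDne _ _ hr]; exact hc3 r j hr
      · intro j
        exact le_trans (hc4 j) (hmono j)
      · intro j hj1 hj2
        rcases le_or_gt (p j : ℕ) ((i : ℕ) + t) with h | h
        · exact le_trans (hc5 j hj1 h) (hmono j)
        · have hpk : p j = k := by
            apply Fin.ext
            simp only [hkdef]
            omega
          have h1' : 1 ≤ C k j := by
            have := hc1 j
            rw [hpk] at this
            omega
          have : c ≤ c * C k j := le_mul_of_one_le_right hc0 h1'
          have h2' : -C i j ≤ c := le_trans (neg_le_abs _) (hcge j)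
          rw [hDi]
          linarith
    · refine ⟨L, C, hC, hc1, hc2, hc3, hc4, ?_⟩
      intro j hj1 hj2
      have : (p j : ℕ) < d := (p j).isLt
      exact hc5 j hj1 (by omega)

lemma outer_step {d m : ℕ} (p : Fin m → Fin d) :
    ∀ s : ℕ, ∀ B : Matrix (Fin d) (Fin m) ℤ,
    (∀ j, 0 < B (p j) j) → (∀ j r, p j < r → B r j = 0) →
    ∃ (L : List (Matrix.TransvectionStruct (Fin d) ℤ)) (C : Matrix (Fin d) (Fin m) ℤ),
      C = (L.map Matrix.TransvectionStruct.toMatrix).prod * B ∧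
      (∀ j, 0 < C (p j) j) ∧
      (∀ j r, p j < r → C r j = 0) ∧
      (∀ (r : Fin d) j, d - s ≤ (r : ℕ) → 0 ≤ C r j) := by
  intro s
  induction s with
  | zero =>
    intro B h1 h2
    refine ⟨[], B, by simp, h1, h2, ?_⟩
    intro r j hr
    exact absurd hr (by have := r.isLt; omega)
  | succ s IH =>
    intro B h1 h2
    obtain ⟨L, C, hC, hc1, hc2, hc3⟩ := IH B h1 h2
    by_cases hs : s < d
    · set i : Fin d := ⟨d - s - 1, by omega⟩ with hidef
      have hlow : ∀ (r : Fin d) j, i < r → 0 ≤ C r j := by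
        intro r j hr
        apply hc3
        have : (i : ℕ) < (r : ℕ) := hr
        simp only [hidef] at this
        omega
      obtain ⟨L2, C2, hC2, hd1, hd2, hd3, _, hd5⟩ := inner_step p i d C hc1 hc2 hlow
      refine ⟨L2 ++ L, C2, ?_, hd1, hd2, ?_⟩
      · rw [hC2, hC, List.map_append, List.prod_append, Matrix.mul_assoc]
      · intro r j hr
        rcases eq_or_ne r i with h | h
        · subst h
          rcases lt_trichotomy (p j) i with hpj | hpj | hpj
          · rw [hd2 j i hpj]
          · rw [← hpj]; exact le_of_lt (hd1 j)
          · exact hd5 j hpj (by have := (p j).isLt; omega)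
        · rw [hd3 r j h]
          apply hc3
          have h' : (r : ℕ) ≠ (i : ℕ) := fun hh => h (Fin.ext hh)
          simp only [hidef] at h'
          omega
    · refine ⟨L, C, hC, hc1, hc2, ?_⟩
      intro r j hr
      exact hc3 r j (by omega)

/-- If `A` is a `d × m` integer matrix such that each column has a nonzero
entry and the last nonzero entry of every column is positive, then there is a product `U`
of elementary row-addition matrices (transvections, which lie in `GL(d, ℤ)`) such that
`U * A` has all entries nonnegative. -/
theorem exists_transvection_product_nonneg (d m : ℕ) (A : Matrix (Fin d) (Fin m) ℤ)
    (hpivot : ∀ j : Fin m, ∃ i : Fin d, A i j ≠ 0 ∧ 0 < A i j ∧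
      ∀ i' : Fin d, i < i' → A i' j = 0) :
    ∃ L : List (Matrix.TransvectionStruct (Fin d) ℤ),
      ∀ i j, 0 ≤ (((L.map Matrix.TransvectionStruct.toMatrix).prod) * A) i j := by
  choose p _ hp1 hp2 using hpivot
  obtain ⟨L, C, hC, _, _, h3⟩ := outer_step p d A hp1 (fun j r hr => hp2 j r hr)
  refine ⟨L, fun i j => ?_⟩
  rw [← hC]
  exact h3 i j (by omega)
end

section
/- Every arrangement of subtori admits a positive system: given a complex torus T with character lattice Λ ≅ ℤ^d and finitely many subtori S_1,…,S_n with associated saturated subgroups Λ_i ⊆ Λ (the characters constant on S_i), there exist a ℤ-basis B of Λ and ℤ-bases B_i of each Λ_i such that every element of every B_i has nonnegative coordinates in the basis B. -/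
/-!
Fix bases of the `Λᵢ` and a bound `M` for the absolute values of all their coordinates. The
functional `φ w = ∑ (M + 1) ^ j * w j` vanishes on no nonzero vector with coordinates bounded by
`M`, so after changing signs every chosen basis vector satisfies `φ w ≥ 1`. Since `φ` has
coefficient `1` on `w 0`, sending `w` to `φ w` in coordinate `0` and to `w j + M * φ w` in every
other coordinate `j` is a unimodular change of coordinates, and in the new coordinates all these
vectors are nonnegative.
-/

open Module

section Shear

variable {R ι : Type*} [CommRing R] [DecidableEq ι]

theorem exists_linearEquiv_shear {φ : Dual R (ι → R)} {i₀ : ι} (hφ : φ (Pi.single i₀ 1) = 1)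
    (M : R) :
    ∃ e : (ι → R) ≃ₗ[R] (ι → R), ∀ x, e x i₀ = φ x ∧ ∀ j ≠ i₀, e x j = x j + φ x * M := by
  let π : Dual R (ι → R) := LinearMap.proj i₀
  have h₁ : (φ - π) (Pi.single i₀ 1) = 0 := by simp [π, hφ]
  have h₂ : π (M • (1 - Pi.single i₀ 1)) = 0 := by simp [π]
  refine ⟨(LinearEquiv.transvection h₁).trans (LinearEquiv.transvection h₂),
    fun x => ⟨?_, fun j hj => ?_⟩⟩
  · simp [LinearMap.transvection.apply, π]
  · simp [LinearMap.transvection.apply, π, hj]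

theorem exists_basis_repr_nonneg [Finite ι] [LinearOrder R] [IsStrictOrderedRing R]
    {φ : Dual R (ι → R)} {i₀ : ι} (hφ : φ (Pi.single i₀ 1) = 1) (M : R) :
    ∃ B : Basis ι R (ι → R), ∀ x, 1 ≤ φ x → (∀ j, |x j| ≤ M) → ∀ j, 0 ≤ B.repr x j := by
  obtain ⟨e, he⟩ := exists_linearEquiv_shear hφ M
  refine ⟨.ofEquivFun e, fun x hx hM j => ?_⟩
  rw [Basis.ofEquivFun_repr_apply]
  obtain rfl | hj := eq_or_ne j i₀
  · rw [(he x).1]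
    linarith
  · have hM₀ : 0 ≤ M := (abs_nonneg _).trans (hM j)
    rw [(he x).2 j hj]
    nlinarith [neg_abs_le (x j), hM j]

end Shear

theorem eq_zero_of_sum_pow_mul_eq_zero {d : ℕ} {N : ℤ} {w : Fin d → ℤ} (hw : ∀ j, |w j| < N)
    (h : ∑ j : Fin d, N ^ (j : ℕ) * w j = 0) : w = 0 := by
  induction d with
  | zero => exact Subsingleton.elim _ _
  | succ d ih =>
    have hN : N ≠ 0 := ((abs_nonneg _).trans_lt (hw 0)).ne'
    rw [Fin.sum_univ_succ] at h
    simp only [Fin.val_zero, pow_zero, one_mul, Fin.val_succ, pow_succ', mul_assoc,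
      ← Finset.mul_sum] at h
    have h₀ : w 0 = 0 := Int.eq_zero_of_abs_lt_dvd
      ⟨_, (eq_neg_of_add_eq_zero_left h).trans (mul_neg _ _).symm⟩ (hw 0)
    have htail : Fin.tail w = 0 :=
      ih (fun j => hw j.succ) (by simpa [Fin.tail, h₀, hN] using h)
    ext j
    exact Fin.cases h₀ (fun j => congrFun htail j) j

def radixForm {d : ℕ} (N : ℤ) : Dual ℤ (Fin d → ℤ) := ∑ j : Fin d, N ^ (j : ℕ) • LinearMap.proj j

@[simp]
theorem radixForm_apply {d : ℕ} (N : ℤ) (w : Fin d → ℤ) :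
    radixForm N w = ∑ j : Fin d, N ^ (j : ℕ) * w j := by
  simp [radixForm]

theorem exists_basis_forall_exists_units_smul_repr_nonneg {κ : Type*} [Finite κ] {d : ℕ}
    (v : κ → Fin d → ℤ) (hv : ∀ k, v k ≠ 0) :
    ∃ B : Basis (Fin d) ℤ (Fin d → ℤ), ∀ k, ∃ u : ℤˣ, ∀ j, 0 ≤ B.repr (u • v k) j := by
  cases d with
  | zero => exact ⟨Pi.basisFun _ _, fun k => (hv k (Subsingleton.elim _ _)).elim⟩
  | succ d =>
    obtain ⟨M, hM⟩ := Finite.exists_le fun p : κ × Fin (d + 1) => |v p.1 p.2|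
    obtain ⟨B, hB⟩ := exists_basis_repr_nonneg (φ := radixForm (M + 1))
      (i₀ := (0 : Fin (d + 1))) (by simp [Pi.single_apply]) M
    refine ⟨B, fun k => ?_⟩
    have hφ : radixForm (M + 1) (v k) ≠ 0 := fun h => hv k <|
      eq_zero_of_sum_pow_mul_eq_zero (fun j => (hM (k, j)).trans_lt (lt_add_one M))
        ((radixForm_apply _ _).symm.trans h)
    obtain ⟨u, hu⟩ : ∃ u : ℤˣ, 1 ≤ u * radixForm (M + 1) (v k) := by
      rcases hφ.lt_or_gt with h | h
      exacts [⟨-1, by rw [Units.val_neg, Units.val_one]; omega⟩,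
        ⟨1, by rw [Units.val_one]; omega⟩]
    refine ⟨u, hB _ (by rwa [Units.smul_def, map_smul, smul_eq_mul]) fun j => ?_⟩
    simpa [Units.smul_def, abs_mul, Int.isUnit_iff_abs_eq.mp u.isUnit] using hM (k, j)

/-- Every arrangement of subtori admits a positive system.  The character
lattice is `Λ = ℤ^d` (modelled as `Fin d → ℤ`), and each subtorus `S_i` determines the
subgroup `Λ_i ⊆ Λ` of characters constant on `S_i`, modelled as a submodule `Λi i`.
There exist a `ℤ`-basis `B` of `Λ` and, for each `i`, a `ℤ`-basis `Bi` of `Λ_i`, such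
that every element of every `Bi` has nonnegative coordinates in the basis `B`. -/
theorem exists_positive_system (d n : ℕ) (Λi : Fin n → Submodule ℤ (Fin d → ℤ)) :
    ∃ B : Module.Basis (Fin d) ℤ (Fin d → ℤ), ∀ i : Fin n, ∃ (m : ℕ)
      (Bi : Module.Basis (Fin m) ℤ (Λi i)),
      ∀ (k : Fin m) (j : Fin d), 0 ≤ B.repr ((Bi k : Fin d → ℤ)) j := by
  let b i := Submodule.basisOfPid (Pi.basisFun ℤ (Fin d)) (Λi i)
  obtain ⟨B, hB⟩ := exists_basis_forall_exists_units_smul_repr_nonneg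
    (fun k : Σ i, Fin (b i).1 => ((b k.1).2 k.2 : Fin d → ℤ))
    fun k => by simpa using (b k.1).2.ne_zero k.2
  refine ⟨B, fun i => ?_⟩
  choose u hu using fun k => hB ⟨i, k⟩
  exact ⟨(b i).1, (b i).2.unitsSMul u, fun k j => by simpa [Basis.unitsSMul_apply] using hu k j⟩
end

section
/- In a graded-commutative ring, let {s_V : V ∈ I} be a family of elements of odd degree 1 with s_V s_U = 0 whenever V and U are incomparable elements of a poset I. For W, L ∈ I define σ_W = Σ_{V ≥ W} s_V. Then for any W, L whose join-set W ∨ L (the set of minimal common upper bounds) satisfies {V : V ≥ W and V ≥ L} = ⋃_{U ∈ W∨L} {V : V ≥ U}, one has σ_W σ_L = (σ_W − σ_L)(Σ_{V ∈ W∨L} σ_V). -/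
/-- In a (graded-commutative) ring, let `s V` (`V` in a finite poset `I`) be
odd-degree-one elements: they square to zero, anticommute, and `s V * s U = 0` whenever
`V` and `U` are incomparable.  Set `σ_W = Σ_{V ≥ W} s V`.  If `J` is the set of minimal
common upper bounds ("join-set") of `W` and `L`, and every element above both `W` and `L`
lies above exactly one element of `J` (so that `{V : V ≥ W ∧ V ≥ L} = ⋃_{U ∈ J} {V ≥ U}`),
then `σ_W * σ_L = (σ_W - σ_L) * (Σ_{U ∈ J} σ_U)`. -/
theorem sigma_mul_sigma (R : Type*) [Ring R] (I : Type*) [PartialOrder I] [Fintype I]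
    [DecidableEq I] [DecidableRel ((· ≤ ·) : I → I → Prop)] (s : I → R)
    (hsq : ∀ V, s V * s V = 0)
    (hanti : ∀ V U, s V * s U = -(s U * s V))
    (hincomp : ∀ V U, ¬ (V ≤ U ∨ U ≤ V) → s V * s U = 0)
    (W L : I) (J : Finset I)
    (hJub : ∀ U ∈ J, W ≤ U ∧ L ≤ U)
    (hJmin : ∀ U ∈ J, ∀ V, W ≤ V → L ≤ V → V ≤ U → V = U)
    (hJuniq : ∀ V, W ≤ V → L ≤ V → ∃! U, U ∈ J ∧ U ≤ V) :
    (∑ V ∈ Finset.univ.filter (fun V => W ≤ V), s V) *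
        (∑ V ∈ Finset.univ.filter (fun V => L ≤ V), s V) =
      ((∑ V ∈ Finset.univ.filter (fun V => W ≤ V), s V) -
        (∑ V ∈ Finset.univ.filter (fun V => L ≤ V), s V)) *
      (∑ U ∈ J, ∑ V ∈ Finset.univ.filter (fun V => U ≤ V), s V) := by
  classical
  set SW := Finset.univ.filter (fun V => W ≤ V) with hSW
  set SL := Finset.univ.filter (fun V => L ≤ V) with hSL
  set SWL := Finset.univ.filter (fun V : I => W ≤ V ∧ L ≤ V) with hSWL
  set T : R := ∑ V ∈ SWL, s V with hT
  -- Step A: the double sum over J equals T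
  have stepA : (∑ U ∈ J, ∑ V ∈ Finset.univ.filter (fun V => U ≤ V), s V) = T := by
    have hbi : SWL = J.biUnion (fun U => Finset.univ.filter (fun V => U ≤ V)) := by
      ext V
      simp only [hSWL, Finset.mem_filter, Finset.mem_univ, true_and, Finset.mem_biUnion]
      constructor
      · rintro ⟨hW, hL⟩
        obtain ⟨U, ⟨hUJ, hUV⟩, -⟩ := hJuniq V hW hL
        exact ⟨U, hUJ, hUV⟩
      · rintro ⟨U, hUJ, hUV⟩
        exact ⟨(hJub U hUJ).1.trans hUV, (hJub U hUJ).2.trans hUV⟩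
    have hdisj : ∀ U₁ ∈ J, ∀ U₂ ∈ J, U₁ ≠ U₂ →
        Disjoint (Finset.univ.filter (fun V => U₁ ≤ V))
          (Finset.univ.filter (fun V => U₂ ≤ V)) := by
      intro U₁ h₁ U₂ h₂ hne
      rw [Finset.disjoint_left]
      intro V hV₁ hV₂
      simp only [Finset.mem_filter, Finset.mem_univ, true_and] at hV₁ hV₂
      have hW : W ≤ V := (hJub U₁ h₁).1.trans hV₁
      have hL : L ≤ V := (hJub U₁ h₁).2.trans hV₁
      obtain ⟨U, -, huniq⟩ := hJuniq V hW hL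
      exact hne ((huniq U₁ ⟨h₁, hV₁⟩).trans (huniq U₂ ⟨h₂, hV₂⟩).symm)
    rw [hT, hbi, Finset.sum_biUnion hdisj]
  rw [stepA]
  -- T * T = 0 by the involution swapping the two indices
  have hTsq : T * T = 0 := by
    rw [hT, Finset.sum_mul_sum, ← Finset.sum_product']
    refine Finset.sum_involution (fun a _ => a.swap) ?_ ?_ ?_ ?_
    · intro a _
      simp only [Prod.fst_swap, Prod.snd_swap]
      rw [hanti a.1 a.2]
      exact neg_add_cancel _
    · intro a _ hne heq
      apply hne
      have : a.1 = a.2 := congrArg Prod.fst heq.symm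
      rw [this]; exact hsq a.2
    · intro a ha
      simp only [Finset.mem_product, Prod.fst_swap, Prod.snd_swap] at ha ⊢
      exact ⟨ha.2, ha.1⟩
    · intro a _; exact Prod.swap_swap a
  -- anticommutation of sums
  have hsumanti : ∀ (A B : Finset I),
      (∑ a ∈ A, s a) * (∑ b ∈ B, s b) = -((∑ b ∈ B, s b) * (∑ a ∈ A, s a)) := by
    intro A B
    rw [Finset.sum_mul_sum, Finset.sum_mul_sum, Finset.sum_comm]
    rw [← Finset.sum_neg_distrib]
    refine Finset.sum_congr rfl fun b _ => ?_
    rw [← Finset.sum_neg_distrib]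
    exact Finset.sum_congr rfl fun a _ => hanti a b
  -- express T as sums over SW and SL with indicators
  have hT1 : T = ∑ A ∈ SW, (if L ≤ A then s A else 0) := by
    rw [hT, hSWL, hSW, Finset.sum_filter, Finset.sum_filter]
    refine Finset.sum_congr rfl fun A _ => ?_
    by_cases h1 : W ≤ A <;> by_cases h2 : L ≤ A <;> simp [h1, h2]
  have hT2 : T = ∑ B ∈ SL, (if W ≤ B then s B else 0) := by
    rw [hT, hSWL, hSL, Finset.sum_filter, Finset.sum_filter]
    refine Finset.sum_congr rfl fun B _ => ?_
    by_cases h1 : W ≤ B <;> by_cases h2 : L ≤ B <;> simp [h1, h2]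
  -- Step C: the key identity  σW σL + T² = σW T + T σL
  have stepC : (∑ V ∈ SW, s V) * (∑ V ∈ SL, s V) + T * T =
      (∑ V ∈ SW, s V) * T + T * (∑ V ∈ SL, s V) := by
    nth_rewrite 1 [hT1]
    nth_rewrite 1 [hT2]
    nth_rewrite 1 [hT2]
    nth_rewrite 1 [hT1]
    rw [Finset.sum_mul_sum, Finset.sum_mul_sum, Finset.sum_mul_sum, Finset.sum_mul_sum,
      ← Finset.sum_add_distrib, ← Finset.sum_add_distrib]
    refine Finset.sum_congr rfl fun A hA => ?_
    rw [← Finset.sum_add_distrib, ← Finset.sum_add_distrib]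
    refine Finset.sum_congr rfl fun B hB => ?_
    have hWA : W ≤ A := by
      rw [hSW] at hA; exact (Finset.mem_filter.mp hA).2
    have hLB : L ≤ B := by
      rw [hSL] at hB; exact (Finset.mem_filter.mp hB).2
    by_cases h1 : L ≤ A <;> by_cases h2 : W ≤ B
    · simp only [h1, h2, if_true]
    · simp only [h1, h2, if_true, if_false, mul_zero, zero_mul, add_zero, zero_add]
    · simp only [h1, h2, if_true, if_false, mul_zero, zero_mul, add_zero, zero_add]
    · simp only [h1, h2, if_false, mul_zero, zero_mul, add_zero, zero_add]
      have hAB : ¬ (A ≤ B ∨ B ≤ A) := by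
        rintro (h | h)
        · exact h2 (hWA.trans h)
        · exact h1 (hLB.trans h)
      rw [hincomp A B hAB]
  have := stepC
  rw [hTsq, add_zero] at this
  rw [this, sub_mul, hsumanti SL SWL, sub_neg_eq_add, ← hT]
end

section
/- Let L be a finite geometric lattice realized by atoms indexed by {1,…,n} (each element of L a join of atoms, with rank function rk). Fix W ∈ L of rank k and let A = {a_1 < a_2 < ⋯ < a_k} ⊆ {1,…,n} be a no-broken-circuit set with join W. Define the edge labelling of a maximal chain F_0 = 0̂ ⋖ F_1 ⋖ ⋯ ⋖ F_k = W whose covers are realized by elements of A to be (b_1,…,b_k), where b_i = max{ j : F_i = F_{i−1} ∨ S_j } (S_j the j-th atom). Then the unique such maximal chain with strictly increasing edge labelling is the chain F_i = S_{a_1} ∨ ⋯ ∨ S_{a_i}, i.e. the one given by taking the elements of A in increasing order, and this chain indeed has labelling (a_1,…,a_k). -/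
/-- A circuit of a matroid: a minimal dependent subset of the ground set. -/
def IsCircuitFin (M : Matroid ℕ) (C : Finset ℕ) : Prop :=
  ↑C ⊆ M.E ∧ ¬ M.Indep ↑C ∧ ∀ x ∈ C, M.Indep ↑(C.erase x)

/-- `A` (the range of `a`) is a no-broken-circuit set: it is independent and contains no
broken circuit (a circuit with its maximal element removed). -/
def IsNBC (M : Matroid ℕ) {k : ℕ} (a : Fin k → ℕ) : Prop :=
  M.Indep (Set.range a) ∧
    ∀ C : Finset ℕ, IsCircuitFin M C → ∀ x ∈ C, (∀ y ∈ C, y ≤ x) →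
      ¬ (↑(C.erase x) ⊆ Set.range a)

/-- Every dependent subset of the ground set contains a circuit. -/
lemma exists_circuit_subset (M : Matroid ℕ) :
    ∀ C : Finset ℕ, ↑C ⊆ M.E → ¬ M.Indep ↑C → ∃ D, D ⊆ C ∧ IsCircuitFin M D := by
  classical
  intro C
  induction C using Finset.strongInduction with
  | _ C ih =>
    intro hCE hC
    by_cases h : ∀ x ∈ C, M.Indep ↑(C.erase x)
    · exact ⟨C, subset_rfl, hCE, hC, h⟩
    · push_neg at h
      obtain ⟨x, hx, hdep⟩ := h
      obtain ⟨D, hD, hcirc⟩ := ih (C.erase x) (Finset.erase_ssubset hx)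
        ((Finset.coe_subset.2 (Finset.erase_subset x C)).trans hCE) hdep
      exact ⟨D, hD.trans (Finset.erase_subset x C), hcirc⟩

/-- Key fact: if `a` is an nbc set, any ground element in the closure of
`{a u : u ≤ i}` is at most `a i`. -/
lemma key_bound (M : Matroid ℕ) {k : ℕ} (a : Fin k → ℕ) (ha : StrictMono a)
    (haE : ∀ i, a i ∈ M.E) (hnbc : IsNBC M a) (i : Fin k) (j : ℕ) (hjE : j ∈ M.E)
    (hj : j ∈ M.closure (a '' {u : Fin k | (u : ℕ) ≤ (i : ℕ)})) : j ≤ a i := by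
  classical
  by_contra h
  push_neg at h
  set S : Set ℕ := a '' {u : Fin k | (u : ℕ) ≤ (i : ℕ)} with hSdef
  have hmemS : ∀ x ∈ S, x ≤ a i := by
    rintro x ⟨u, hu, rfl⟩
    exact ha.monotone (Fin.le_def.2 hu)
  have hSind : M.Indep S := hnbc.1.subset (Set.image_subset_range a _)
  have hjS : j ∉ S := fun hmem => absurd (hmemS j hmem) (by omega)
  have hdep : ¬ M.Indep (insert j S) := fun hind =>
    hind.notMem_closure_diff_of_mem (Set.mem_insert _ _)
      (by rw [Set.insert_diff_self_of_notMem hjS]; exact hj)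
  set T : Finset ℕ :=
    insert j ((Finset.univ.filter (fun u : Fin k => (u : ℕ) ≤ (i : ℕ))).image a) with hTdef
  have hcoe : (↑T : Set ℕ) = insert j S := by
    rw [hTdef, hSdef]
    ext x
    simp
  have hTE : (↑T : Set ℕ) ⊆ M.E := by
    rw [hcoe]
    rintro x (rfl | hx)
    · exact hjE
    · obtain ⟨u, _, rfl⟩ := hx
      exact haE u
  have hTdep : ¬ M.Indep (↑T : Set ℕ) := by rw [hcoe]; exact hdep
  obtain ⟨D, hDT, hcirc⟩ := exists_circuit_subset M T hTE hTdep
  have hDsub : (↑D : Set ℕ) ⊆ insert j S := hcoe ▸ (Finset.coe_subset.2 hDT)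
  have hjD : j ∈ D := by
    by_contra hjD
    have hDS : (↑D : Set ℕ) ⊆ S := by
      intro x hx
      rcases hDsub hx with rfl | hxS
      · exact absurd hx hjD
      · exact hxS
    exact hcirc.2.1 (hSind.subset hDS)
  have hmax : ∀ y ∈ D, y ≤ j := by
    intro y hy
    rcases hDsub hy with rfl | hyS
    · exact le_rfl
    · exact (hmemS y hyS).trans (le_of_lt h)
  refine hnbc.2 D hcirc j hjD hmax ?_
  intro y hy
  simp only [Finset.coe_erase, Set.mem_diff, Set.mem_singleton_iff] at hy
  rcases hDsub hy.1 with rfl | hyS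
  · exact absurd rfl hy.2
  · exact Set.image_subset_range a _ hyS

/-- In the geometric lattice of flats of a (finite) matroid with atoms
indexed by the ground set, fix a no-broken-circuit set `A = {a_1 < ⋯ < a_k}` with join
`W`.  A maximal chain `F_0 = 0̂ ⋖ ⋯ ⋖ F_k = W` adapted to `A` is given by a permutation
`σ`, via `F_i = F_{i-1} ∨ S_{a_{σ(i)}}` (`∨` with an atom being closure of the union).
Its edge labelling is `b_i = max { j : F_i = F_{i-1} ∨ S_j }`.  Then the chain has
strictly increasing labelling if and only if `σ` is the identity (i.e. the chain takes
the elements of `A` in increasing order), and that chain indeed has labelling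
`(a_1, …, a_k)`. -/
theorem nbc_increasing_flag (n k : ℕ) (M : Matroid ℕ) [M.Finite] (hE : M.E = Set.Icc 1 n)
    (a : Fin k → ℕ) (ha : StrictMono a) (haE : ∀ i, a i ∈ M.E) (hnbc : IsNBC M a)
    (σ : Equiv.Perm (Fin k)) (F : Fin (k + 1) → Set ℕ)
    (hF0 : F 0 = M.closure ∅)
    (hFs : ∀ i : Fin k, F i.succ = M.closure (F i.castSucc ∪ {a (σ i)}))
    (lab : Fin k → ℕ)
    (hlab : ∀ i : Fin k,
      lab i = sSup {j | j ∈ M.E ∧ F i.succ = M.closure (F i.castSucc ∪ {j})}) :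
    (StrictMono lab ↔ ∀ i, σ i = i) ∧ ((∀ i, σ i = i) → ∀ i, lab i = a i) := by
  classical
  -- Explicit description of the chain
  have hFeq : ∀ m : Fin (k+1),
      F m = M.closure (a '' (σ '' {t : Fin k | (t : ℕ) < (m : ℕ)})) := by
    intro m
    induction m using Fin.induction with
    | zero =>
      have hempty : {t : Fin k | (t : ℕ) < ((0 : Fin (k+1)) : ℕ)} = ∅ := by
        ext t; simp
      rw [hF0, hempty]
      simp
    | succ i ihm =>
      rw [hFs i, ihm, Set.union_singleton, Matroid.closure_insert_closure_eq_closure_insert,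
        ← Set.image_insert_eq, ← Set.image_insert_eq]
      have hset : insert i {t : Fin k | (t : ℕ) < (i.castSucc : ℕ)}
          = {t : Fin k | (t : ℕ) < (i.succ : ℕ)} := by
        ext t
        simp only [Set.mem_insert_iff, Set.mem_setOf_eq, Fin.val_succ, Fin.coe_castSucc,
          Fin.ext_iff]
        omega
      rw [hset]
  -- facts about the label sets
  have hmemset : ∀ i : Fin k,
      a (σ i) ∈ {j | j ∈ M.E ∧ F i.succ = M.closure (F i.castSucc ∪ {j})} :=
    fun i => ⟨haE _, hFs i⟩
  have hbdd : ∀ i : Fin k,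
      BddAbove {j | j ∈ M.E ∧ F i.succ = M.closure (F i.castSucc ∪ {j})} := by
    intro i
    refine ⟨n, fun j hj => ?_⟩
    have := hj.1
    rw [hE] at this
    exact this.2
  have hmem : ∀ i : Fin k,
      lab i ∈ {j | j ∈ M.E ∧ F i.succ = M.closure (F i.castSucc ∪ {j})} := by
    intro i
    rw [hlab i]
    exact Nat.sSup_mem ⟨_, hmemset i⟩ (hbdd i)
  have hge : ∀ i : Fin k, a (σ i) ≤ lab i := by
    intro i
    rw [hlab i]
    exact le_csSup (hbdd i) (hmemset i)
  have hlabE : ∀ i, lab i ∈ M.E := fun i => (hmem i).1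
  have hlabF : ∀ i : Fin k, lab i ∈ F i.succ := by
    intro i
    rw [(hmem i).2]
    exact M.mem_closure_of_mem' (Set.mem_union_right _ rfl) (hlabE i)
  -- bound on labels
  have hFsub : ∀ (i t : Fin k),
      (∀ s : Fin k, (s : ℕ) ≤ (t : ℕ) → ((σ s : Fin k) : ℕ) ≤ (i : ℕ)) → lab t ≤ a i := by
    intro i t hst
    apply key_bound M a ha haE hnbc i (lab t) (hlabE t)
    have h1 : lab t ∈ F t.succ := hlabF t
    rw [hFeq t.succ] at h1
    refine M.closure_subset_closure ?_ h1
    rintro x ⟨u, ⟨s, hs, rfl⟩, rfl⟩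
    simp only [Set.mem_setOf_eq, Fin.val_succ] at hs
    exact ⟨σ s, hst s (by omega), rfl⟩
  -- σ = id implies lab = a
  have hid_lab : (∀ i, σ i = i) → ∀ i, lab i = a i := by
    intro hid i
    have h1 : lab i ≤ a i := hFsub i i (fun s hs => by rw [hid s]; exact hs)
    have h2 : a i ≤ lab i := by have := hge i; rwa [hid i] at this
    omega
  -- downward induction step
  have main : ∀ i : Fin k, StrictMono lab → (∀ j : Fin k, (i : ℕ) < (j : ℕ) → σ j = j) →
      σ i = i := by
    intro i hmono hgt
    have hσle : ∀ t : Fin k, (t : ℕ) ≤ (i : ℕ) → ((σ t : Fin k) : ℕ) ≤ (i : ℕ) := by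
      intro t hti
      by_contra hgt'
      push_neg at hgt'
      have h1 : σ (σ t) = σ t := hgt (σ t) hgt'
      have h2 : σ t = t := σ.injective h1
      rw [h2] at hgt'
      omega
    set t : Fin k := σ.symm i with htdef
    have hσt : σ t = i := σ.apply_symm_apply i
    have hti : (t : ℕ) ≤ (i : ℕ) := by
      by_contra hgt'
      push_neg at hgt'
      have h1 : σ t = t := hgt t hgt'
      have h3 : t = i := by rw [← h1, hσt]
      rw [h3] at hgt'
      omega
    have hlt : lab t ≤ a i := hFsub i t (fun s hs => hσle s (hs.trans hti))
    have hgei : a i ≤ lab t := by have := hge t; rwa [hσt] at this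
    have hlabi : lab i ≤ a i := hFsub i i (fun s hs => hσle s hs)
    by_contra hne
    have htne : t ≠ i := fun h => hne (h ▸ hσt)
    have htlt : t < i := lt_of_le_of_ne (Fin.le_def.2 hti) htne
    have := hmono htlt
    omega
  have hforward : StrictMono lab → ∀ i, σ i = i := by
    intro hmono
    have aux : ∀ d : ℕ, ∀ i : Fin k, k - 1 - (i : ℕ) ≤ d → σ i = i := by
      intro d
      induction d with
      | zero =>
        intro i hi
        exact main i hmono (fun j hj => absurd hj (by have := j.isLt; omega))
      | succ d ih =>
        intro i hi
        exact main i hmono (fun j hj => ih j (by have := j.isLt; omega))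
    intro i
    exact aux (k - 1 - (i : ℕ)) i le_rfl
  refine ⟨⟨hforward, fun hid => ?_⟩, hid_lab⟩
  intro x y hxy
  rw [hid_lab hid x, hid_lab hid y]
  exact ha hxy
end

section
/- In an exterior (graded-commutative) ℚ-algebra, let β_0, β_1, …, β_k be elements of degree 1 of the form β_i = Σ_{j ∈ R} ⟨χ_i, j⟩ b_j, where {b_j}_{j∈R} are degree-1 generators, R spans a k-dimensional rational vector space V*, χ_i ∈ V, and the product b_{j_1}⋯b_{j_m} vanishes whenever {j_1,…,j_m} is not contained in a common simplicial cone of a fixed complete simplicial fan in V*. If χ_0, …, χ_k are linearly dependent in V, then β_0 β_1 ⋯ β_k = 0. -/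
/-!
Each `β_i` lies in the `ℚ`-span `M` of the generators `b j`, so `β_0 ⋯ β_k` lies in `M ^ (k + 1)`,
which is spanned by the monomials `b j_0 ⋯ b j_k`. Such a monomial vanishes: if an index repeats,
by anticommutation; otherwise the `k + 1` distinct rays `ray j_i` would lie in one cone of the fan,
i.e. form a linearly independent family in a `k`-dimensional space.
-/

open Module

namespace Submodule

variable {R A : Type*} [CommSemiring R] [Semiring A] [Algebra R A]

theorem list_prod_mem_pow {M : Submodule R A} {L : List A} (h : ∀ x ∈ L, x ∈ M) :
    L.prod ∈ M ^ L.length := by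
  induction L with
  | nil => exact one_le.mp le_rfl
  | cons a t ih =>
    rw [List.prod_cons, List.length_cons, pow_succ']
    exact mul_mem_mul (h a List.mem_cons_self) (ih fun x hx => h x (List.mem_cons_of_mem a hx))

theorem span_range_pow_eq_bot {ι : Type*} (b : ι → A) {n : ℕ}
    (h : ∀ l : List ι, l.length = n → (l.map b).prod = 0) :
    span R (Set.range b) ^ n = ⊥ := by
  rw [span_pow, span_eq_bot]
  intro x hx
  obtain ⟨f, rfl⟩ := Set.mem_pow.mp hx
  choose g hg using fun i => (f i).2
  simpa only [← hg, List.map_ofFn, Function.comp_def] using h (List.ofFn g) List.length_ofFn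

end Submodule

section Anticommuting

variable {ι A : Type*} [Ring A] (b : ι → A)

theorem mul_prod_map_eq_zero_of_mem (hsq : ∀ j, b j * b j = 0)
    (hanti : ∀ j j', b j * b j' = -(b j' * b j)) {a : ι} {t : List ι} (ha : a ∈ t) :
    b a * (t.map b).prod = 0 := by
  induction t with
  | nil => simp at ha
  | cons c t ih =>
    rw [List.map_cons, List.prod_cons, ← mul_assoc]
    rcases List.mem_cons.mp ha with rfl | ha
    · rw [hsq, zero_mul]
    · rw [hanti, neg_mul, mul_assoc, ih ha, mul_zero, neg_zero]

theorem prod_map_eq_zero_of_not_nodup (hsq : ∀ j, b j * b j = 0)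
    (hanti : ∀ j j', b j * b j' = -(b j' * b j)) {l : List ι} (hl : ¬ l.Nodup) :
    (l.map b).prod = 0 := by
  induction l with
  | nil => exact absurd List.nodup_nil hl
  | cons a t ih =>
    rw [List.map_cons, List.prod_cons]
    rcases not_and_or.mp (List.nodup_cons.not.mp hl) with ha | ht
    · exact mul_prod_map_eq_zero_of_mem b hsq hanti (not_not.mp ha)
    · rw [ih ht, mul_zero]

theorem prod_map_eq_zero_of_finrank_lt_length {K V : Type*} [DivisionRing K] [AddCommGroup V]
    [Module K V] [Module.Finite K V] (ray : ι → V) (Δ : Set (Finset ι))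
    (hsimp : ∀ C ∈ Δ, LinearIndependent K (fun j : C => ray j))
    (hsq : ∀ j, b j * b j = 0) (hanti : ∀ j j', b j * b j' = -(b j' * b j))
    (hmono : ∀ l : List ι, (¬ ∃ C ∈ Δ, ∀ j ∈ l, j ∈ C) → (l.map b).prod = 0)
    {l : List ι} (hl : finrank K V < l.length) :
    (l.map b).prod = 0 := by
  classical
  by_cases hnd : l.Nodup
  · refine hmono l fun ⟨C, hC, hlC⟩ => hl.not_ge ?_
    calc l.length = l.toFinset.card := (List.toFinset_card_of_nodup hnd).symm
      _ ≤ C.card := Finset.card_le_card fun j hj => hlC j (List.mem_toFinset.mp hj)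
      _ = Fintype.card C := (Fintype.card_coe C).symm
      _ ≤ finrank K V := (hsimp C hC).fintype_card_le_finrank
  · exact prod_map_eq_zero_of_not_nodup b hsq hanti hnd

end Anticommuting

theorem beta_prod_eq_zero_general (k : ℕ) (A : Type*) [Ring A] [Algebra ℚ A]
    (ι : Type*) [Fintype ι] (ray : ι → (Fin k → ℚ))
    (Δ : Set (Finset ι))
    (hsimp : ∀ C ∈ Δ, LinearIndependent ℚ (fun j : C => ray j))
    (b : ι → A)
    (hsq : ∀ j, b j * b j = 0)
    (hanti : ∀ j j', b j * b j' = -(b j' * b j))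
    (hmono : ∀ l : List ι, (¬ ∃ C ∈ Δ, ∀ j ∈ l, j ∈ C) → (l.map b).prod = 0)
    (χ : Fin (k + 1) → (Fin k → ℚ)) :
    (List.ofFn (fun i : Fin (k + 1) =>
      ∑ j : ι, (∑ t : Fin k, χ i t * ray j t) • b j)).prod = 0 := by
  set M := Submodule.span ℚ (Set.range b)
  have hβ : ∀ i : Fin (k + 1), ∑ j : ι, (∑ t : Fin k, χ i t * ray j t) • b j ∈ M := fun i =>
    Submodule.sum_mem _ fun j _ => M.smul_mem _ (Submodule.subset_span ⟨j, rfl⟩)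
  have hM : M ^ (k + 1) = ⊥ := Submodule.span_range_pow_eq_bot b fun l hl =>
    prod_map_eq_zero_of_finrank_lt_length b ray Δ hsimp hsq hanti hmono (by simp [hl])
  have hprod := Submodule.list_prod_mem_pow (M := M) (L := List.ofFn _)
    (List.forall_mem_ofFn_iff.mpr hβ)
  rwa [List.length_ofFn, hM, Submodule.mem_bot] at hprod

/-- In a (graded-commutative) `ℚ`-algebra, let `b j` (`j ∈ R`, the rays of
a complete simplicial fan `Δ` in a `k`-dimensional space `V* = ℚ^k`) be degree-one
generators which square to zero and anticommute, and such that a product of `b j`'s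
vanishes whenever its index set is not contained in (the ray set of) a common cone of
`Δ`.  For `χ_0, …, χ_k ∈ V = ℚ^k` put `β_i = Σ_{j ∈ R} ⟨χ_i, ray j⟩ • b j`.  If
`χ_0, …, χ_k` are linearly dependent, then `β_0 β_1 ⋯ β_k = 0`. -/
theorem beta_prod_eq_zero (k : ℕ) (A : Type*) [Ring A] [Algebra ℚ A]
    (ι : Type*) [Fintype ι] (ray : ι → (Fin k → ℚ)) (hray : Function.Injective ray)
    (Δ : Set (Finset ι))
    (hsimp : ∀ C ∈ Δ, LinearIndependent ℚ (fun j : C => ray j))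
    (b : ι → A)
    (hsq : ∀ j, b j * b j = 0)
    (hanti : ∀ j j', b j * b j' = -(b j' * b j))
    (hmono : ∀ l : List ι, (¬ ∃ C ∈ Δ, ∀ j ∈ l, j ∈ C) → (l.map b).prod = 0)
    (χ : Fin (k + 1) → (Fin k → ℚ)) (hdep : ¬ LinearIndependent ℚ χ) :
    (List.ofFn (fun i : Fin (k + 1) =>
      ∑ j : ι, (∑ t : Fin k, χ i t * ray j t) • b j)).prod = 0 :=
  beta_prod_eq_zero_general k A ι ray Δ hsimp b hsq hanti hmono χ
end
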